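/- arXiv:1912.07196 — 4 statements merged into one kernel-verified Lean document; each statement's English description precedes it below -/
import Mathlib

section
/- Let n ≥ 2, let u_1 < u_2 < ... < u_{n−1} be reals, and let c ≥ u_{n−1}. For t > c and an n×n matrix Φ, let M(t,Φ) be the n×n matrix with entries M(t,Φ)_{ij} = (δ_{in} − δ_{jn})·Φ_{ij}/(û_i − û_j) for i ≠ j and 0 for i = j, where û_i = u_i for i < n and û_n = t. Suppose Φ : (c,∞) → Mat_n(ℂ) is differentiable, Φ(t) is Hermitian for all t, and Φ′(t) = (2πi)⁻¹·(Φ(t)·M(t,Φ(t)) − M(t,Φ(t))·Φ(t)). Then there exist a Hermitian matrix H, a constant C > 0 and t₀ > c such that ‖δ_{n−1}(Φ(t)) − H‖ ≤ C/t for all t ≥ t₀. -/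
open Matrix

open scoped Matrix.Norms.L2Operator

noncomputable section

/-- `û(t) = (u_1, ..., u_{n-1}, t)`. -/
def uhat (m : ℕ) (u : Fin m → ℝ) (t : ℝ) (i : Fin (m + 1)) : ℝ :=
  Fin.lastCases t u i

/-- The matrix `M(t,Φ)` with entries `(δ_{in} − δ_{jn})·Φ_{ij}/(û_i − û_j)` off the
diagonal and `0` on the diagonal. -/
def Mmat (m : ℕ) (u : Fin m → ℝ) (t : ℝ) (P : Matrix (Fin (m + 1)) (Fin (m + 1)) ℂ) :
    Matrix (Fin (m + 1)) (Fin (m + 1)) ℂ :=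
  Matrix.of fun i j =>
    if i = j then 0
    else (((if i = Fin.last m then 1 else 0) : ℂ) - (if j = Fin.last m then 1 else 0)) *
      P i j / ((uhat m u t i : ℂ) - (uhat m u t j : ℂ))

/-- `δ_k(A)`: keeps the upper-left `k × k` block and the diagonal, zero elsewhere
(indices `0`-based, so "`i ≤ k`" in `1`-based notation is `(i : ℕ) < k`). -/
def deltaTrunc (m : ℕ) (k : ℕ) (A : Matrix (Fin (m + 1)) (Fin (m + 1)) ℂ) :
    Matrix (Fin (m + 1)) (Fin (m + 1)) ℂ :=
  Matrix.of fun i j => if ((i : ℕ) < k ∧ (j : ℕ) < k) ∨ i = j then A i j else 0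


/-! The right-hand side of the equation is a commutator `[Φ, M]`, so `tr (Φ²)` is conserved;
as `Φ` is Hermitian this bounds every entry of `Φ` uniformly in `t`. In the upper-left
`(n-1) × (n-1)` block only the last row and column of `M` contribute, giving the entries
`Φ_{in} Φ_{nj} ((t - u_j)⁻¹ - (t - u_i)⁻¹) = O(t⁻²)`, while the diagonal of `[Φ, M]` vanishes.
Hence `‖(δ_{n-1} Φ)'(t)‖ = O(t⁻²)`, and integrating from `t` to `∞` yields a limit `H`,
Hermitian as a limit of Hermitian matrices, with `‖δ_{n-1} Φ(t) - H‖ = O(t⁻¹)`. -/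

open Set Filter Topology

namespace Matrix

variable {𝕜 m n : Type*} [RCLike 𝕜] [Fintype m] [Fintype n]

lemma l2_opNorm_single [DecidableEq m] [DecidableEq n] (i : m) (j : n) (a : 𝕜) :
    ‖single i j a‖ = ‖a‖ := by
  have h : ‖single i j a‖ * ‖single i j a‖ = ‖a‖ * ‖a‖ := by
    rw [← l2_opNorm_conjTranspose_mul_self, conjTranspose_single, single_mul_single_same,
      ← diagonal_single, l2_opNorm_diagonal, Pi.norm_single, norm_mul, norm_star]
  nlinarith [norm_nonneg (single i j a), norm_nonneg a]

lemma l2_opNorm_le_of_forall_norm_apply_le [DecidableEq m] [DecidableEq n] {A : Matrix m n 𝕜}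
    {r : ℝ} (hr : ∀ i j, ‖A i j‖ ≤ r) : ‖A‖ ≤ Fintype.card m * Fintype.card n * r :=
  calc ‖A‖ = ‖∑ i, ∑ j, single i j (A i j)‖ := by rw [← matrix_eq_sum_single]
    _ ≤ ∑ i, ∑ j, ‖single i j (A i j)‖ :=
      (norm_sum_le _ _).trans (Finset.sum_le_sum fun i _ => norm_sum_le _ _)
    _ ≤ ∑ _i : m, ∑ _j : n, r := by
      gcongr with i _ j _
      rw [l2_opNorm_single]
      exact hr i j
    _ = Fintype.card m * Fintype.card n * r := by simp [mul_assoc]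

lemma norm_apply_sq_le_re_trace_conjTranspose_mul_self (A : Matrix m n 𝕜) (i : m) (j : n) :
    ‖A i j‖ ^ 2 ≤ RCLike.re (Aᴴ * A).trace := by
  have h : RCLike.re (Aᴴ * A).trace = ∑ j, ∑ i, ‖A i j‖ ^ 2 := by
    simp [trace, mul_apply, RCLike.conj_mul]
  rw [h]
  exact (Finset.single_le_sum (f := fun i => ‖A i j‖ ^ 2) (fun _ _ => by positivity)
    (Finset.mem_univ i)).trans (Finset.single_le_sum (f := fun j => ∑ i, ‖A i j‖ ^ 2)
      (fun _ _ => by positivity) (Finset.mem_univ j))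

lemma trace_commutator_mul_add_mul_commutator {R n : Type*} [CommRing R] [Fintype n]
    (A M : Matrix n n R) : ((A * M - M * A) * A + A * (A * M - M * A)).trace = 0 := by
  simp only [sub_mul, mul_sub, trace_add, trace_sub, Matrix.mul_assoc]
  rw [trace_mul_comm M (A * A), Matrix.mul_assoc]
  abel

variable [DecidableEq n]

lemma trace_mul_self_eq_of_hasDerivAt_commutator {Φ N : ℝ → Matrix n n ℂ} {a : ℂ} {s : Set ℝ}
    (hs : IsOpen s) (hs' : IsPreconnected s)
    (hΦ : ∀ t ∈ s, HasDerivAt Φ (a • (Φ t * N t - N t * Φ t)) t) {t₁ t₂ : ℝ} (ht₁ : t₁ ∈ s)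
    (ht₂ : t₂ ∈ s) : (Φ t₁ * Φ t₁).trace = (Φ t₂ * Φ t₂).trace := by
  let tr : Matrix n n ℂ →L[ℝ] ℂ :=
    LinearMap.toContinuousLinearMap ((traceLinearMap n ℂ ℂ).restrictScalars ℝ)
  have hderiv : ∀ t ∈ s, HasDerivAt (fun t => (Φ t * Φ t).trace) 0 t := by
    intro t ht
    have h : HasDerivAt (fun t => (Φ t * Φ t).trace) _ t :=
      tr.hasFDerivAt.comp_hasDerivAt t ((hΦ t ht).mul (hΦ t ht))
    refine h.congr_deriv ?_
    simp only [tr, LinearMap.coe_toContinuousLinearMap', LinearMap.coe_restrictScalars,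
      traceLinearMap_apply, Matrix.smul_mul, Matrix.mul_smul, ← smul_add, trace_smul,
      trace_commutator_mul_add_mul_commutator, smul_zero]
  exact hs.is_const_of_deriv_eq_zero hs'
    (fun t ht => (hderiv t ht).differentiableAt.differentiableWithinAt)
    (fun t ht => (hderiv t ht).deriv) ht₁ ht₂

lemma norm_apply_le_of_hasDerivAt_commutator {Φ N : ℝ → Matrix n n ℂ} {a : ℂ} {s : Set ℝ}
    (hs : IsOpen s) (hs' : IsPreconnected s) (hherm : ∀ t ∈ s, (Φ t).IsHermitian)
    (hΦ : ∀ t ∈ s, HasDerivAt Φ (a • (Φ t * N t - N t * Φ t)) t) {t₀ : ℝ} (ht₀ : t₀ ∈ s)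
    {t : ℝ} (ht : t ∈ s) (i j : n) : ‖Φ t i j‖ ≤ √(RCLike.re (Φ t₀ * Φ t₀).trace) := by
  have h := norm_apply_sq_le_re_trace_conjTranspose_mul_self (Φ t) i j
  rw [(hherm t ht).eq, trace_mul_self_eq_of_hasDerivAt_commutator hs hs' hΦ ht ht₀] at h
  exact Real.le_sqrt_of_sq_le h

end Matrix

section MeanValue

variable {E : Type*} [NormedAddCommGroup E] [NormedSpace ℝ E]

lemma norm_sub_le_of_norm_deriv_le_div_sq {ψ ψ' : ℝ → E} {c K : ℝ}
    (hψ : ∀ t ∈ Ioi c, HasDerivAt ψ (ψ' t) t) (hψ' : ∀ t ∈ Ioi c, ‖ψ' t‖ ≤ K / (t - c) ^ 2)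
    {a b : ℝ} (ha : c < a) (hab : a ≤ b) : ‖ψ b - ψ a‖ ≤ K / (a - c) - K / (b - c) := by
  have hmem : ∀ x ∈ Icc a b, c < x := fun x hx => ha.trans_le hx.1
  have hB : ∀ x ∈ Icc a b, HasDerivAt (fun y => K / (a - c) - K / (y - c)) (K / (x - c) ^ 2) x := by
    intro x hx
    have hx0 : x - c ≠ 0 := (sub_pos.2 (hmem x hx)).ne'
    have h := ((((hasDerivAt_id x).sub_const c).inv hx0).const_mul K).const_sub (K / (a - c))
    simp only [Pi.inv_apply, id, ← div_eq_mul_inv] at h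
    exact h.congr_deriv (by ring)
  refine image_norm_le_of_norm_deriv_right_le_deriv_boundary' (f := fun x => ψ x - ψ a)
    (fun x hx => ((hψ x (hmem x hx)).sub_const _).continuousAt.continuousWithinAt)
    (fun x hx => ((hψ x (hmem x (Ico_subset_Icc_self hx))).sub_const _).hasDerivWithinAt)
    (by simp) (fun x hx => (hB x hx).continuousAt.continuousWithinAt)
    (fun x hx => (hB x (Ico_subset_Icc_self hx)).hasDerivWithinAt)
    (fun x hx => hψ' x (hmem x (Ico_subset_Icc_self hx))) ⟨hab, le_rfl⟩

theorem exists_tendsto_norm_sub_le_of_norm_deriv_le_div_sq [CompleteSpace E] {ψ ψ' : ℝ → E}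
    {c K : ℝ} (hψ : ∀ t ∈ Ioi c, HasDerivAt ψ (ψ' t) t)
    (hψ' : ∀ t ∈ Ioi c, ‖ψ' t‖ ≤ K / (t - c) ^ 2) :
    ∃ H, Tendsto ψ atTop (𝓝 H) ∧ ∀ t ∈ Ioi c, ‖ψ t - H‖ ≤ K / (t - c) := by
  have hK : 0 ≤ K := by
    have h := (norm_nonneg _).trans (hψ' (c + 1) (by simp))
    simpa using h
  have hdecay : Tendsto (fun t => K / (t - c)) atTop (𝓝 0) :=
    tendsto_const_nhds.div_atTop (tendsto_atTop_add_const_right _ _ tendsto_id)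
  have hle : ∀ a b, c < a → a ≤ b → ‖ψ b - ψ a‖ ≤ K / (a - c) := fun a b ha hab =>
    (norm_sub_le_of_norm_deriv_le_div_sq hψ hψ' ha hab).trans
      (sub_le_self _ (div_nonneg hK (sub_pos.2 (ha.trans_le hab)).le))
  have hcauchy : CauchySeq ψ := by
    refine Metric.cauchySeq_iff'.2 fun ε hε => ?_
    obtain ⟨N, hN, hcN⟩ := ((hdecay.eventually (gt_mem_nhds hε)).and (eventually_gt_atTop c)).exists
    exact ⟨N, fun n hn => (dist_eq_norm _ _).trans_lt ((hle N n hcN hn).trans_lt hN)⟩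
  obtain ⟨H, hH⟩ := cauchySeq_tendsto_of_complete hcauchy
  refine ⟨H, hH, fun t ht => ?_⟩
  refine le_of_tendsto ((tendsto_const_nhds.sub hH).norm) ?_
  filter_upwards [eventually_ge_atTop t] with s hs
  rw [norm_sub_rev]
  exact hle t s ht hs

end MeanValue

section deltaTrunc

def deltaTruncLinearMap (m k : ℕ) :
    Matrix (Fin (m + 1)) (Fin (m + 1)) ℂ →ₗ[ℂ] Matrix (Fin (m + 1)) (Fin (m + 1)) ℂ where
  toFun := deltaTrunc m k
  map_add' A B := by
    ext i j
    simp only [deltaTrunc, of_apply, Matrix.add_apply]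
    split_ifs <;> simp
  map_smul' a A := by
    ext i j
    simp only [deltaTrunc, of_apply, Matrix.smul_apply]
    split_ifs <;> simp

variable {m : ℕ}

lemma deltaTrunc_smul (k : ℕ) (a : ℂ) (A : Matrix (Fin (m + 1)) (Fin (m + 1)) ℂ) :
    deltaTrunc m k (a • A) = a • deltaTrunc m k A :=
  (deltaTruncLinearMap m k).map_smul a A

lemma HasDerivAt.deltaTrunc {Φ : ℝ → Matrix (Fin (m + 1)) (Fin (m + 1)) ℂ}
    {Φ' : Matrix (Fin (m + 1)) (Fin (m + 1)) ℂ} {t : ℝ} (k : ℕ) (h : HasDerivAt Φ Φ' t) :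
    HasDerivAt (fun t => deltaTrunc m k (Φ t)) (deltaTrunc m k Φ') t :=
  (LinearMap.toContinuousLinearMap ((deltaTruncLinearMap m k).restrictScalars ℝ)).hasFDerivAt
    |>.comp_hasDerivAt t h

lemma Matrix.IsHermitian.deltaTrunc {A : Matrix (Fin (m + 1)) (Fin (m + 1)) ℂ}
    (hA : A.IsHermitian) (k : ℕ) : (deltaTrunc m k A).IsHermitian := by
  ext i j
  simp only [_root_.deltaTrunc, conjTranspose_apply, of_apply, and_comm, eq_comm (a := j)]
  split_ifs <;> simp [← hA.apply i j]

variable (A : Matrix (Fin (m + 1)) (Fin (m + 1)) ℂ)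

@[simp] lemma deltaTrunc_apply_castSucc_castSucc (i j : Fin m) :
    deltaTrunc m m A i.castSucc j.castSucc = A i.castSucc j.castSucc := by
  simp [deltaTrunc]

@[simp] lemma deltaTrunc_apply_castSucc_last (i : Fin m) :
    deltaTrunc m m A i.castSucc (Fin.last m) = 0 := by
  simp [deltaTrunc, Fin.castSucc_ne_last]

@[simp] lemma deltaTrunc_apply_last_castSucc (j : Fin m) :
    deltaTrunc m m A (Fin.last m) j.castSucc = 0 := by
  simp [deltaTrunc, (Fin.castSucc_ne_last j).symm]

@[simp] lemma deltaTrunc_apply_last_last :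
    deltaTrunc m m A (Fin.last m) (Fin.last m) = A (Fin.last m) (Fin.last m) := by
  simp [deltaTrunc]

end deltaTrunc

section Mmat

variable {m : ℕ} {u : Fin m → ℝ} {t : ℝ} {P : Matrix (Fin (m + 1)) (Fin (m + 1)) ℂ}

@[simp] lemma uhat_last : uhat m u t (Fin.last m) = t := by simp [uhat]

@[simp] lemma uhat_castSucc (i : Fin m) : uhat m u t i.castSucc = u i := by simp [uhat]

@[simp] lemma Mmat_apply_castSucc_castSucc (i j : Fin m) :
    Mmat m u t P i.castSucc j.castSucc = 0 := by
  simp [Mmat, Fin.castSucc_ne_last]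

@[simp] lemma Mmat_apply_castSucc_last (i : Fin m) :
    Mmat m u t P i.castSucc (Fin.last m) = P i.castSucc (Fin.last m) / (t - u i) := by
  simp [Mmat, Fin.castSucc_ne_last, neg_div, ← div_neg]

@[simp] lemma Mmat_apply_last_castSucc (j : Fin m) :
    Mmat m u t P (Fin.last m) j.castSucc = P (Fin.last m) j.castSucc / (t - u j) := by
  simp [Mmat, (Fin.castSucc_ne_last j).symm]

@[simp] lemma Mmat_apply_last_last : Mmat m u t P (Fin.last m) (Fin.last m) = 0 := by
  simp [Mmat]

lemma commutator_Mmat_apply_castSucc_castSucc (i j : Fin m) :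
    (P * Mmat m u t P - Mmat m u t P * P) i.castSucc j.castSucc =
      P i.castSucc (Fin.last m) * P (Fin.last m) j.castSucc *
        (((t - u j)⁻¹ - (t - u i)⁻¹ : ℝ) : ℂ) := by
  simp [mul_apply, Fin.sum_univ_castSucc]
  ring

lemma commutator_Mmat_apply_last_last :
    (P * Mmat m u t P - Mmat m u t P * P) (Fin.last m) (Fin.last m) = 0 := by
  simp only [Matrix.sub_apply, mul_apply, Fin.sum_univ_castSucc, Mmat_apply_castSucc_last,
    Mmat_apply_last_castSucc, Mmat_apply_last_last, mul_zero, zero_mul, add_zero,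
    ← Finset.sum_sub_distrib]
  exact Finset.sum_eq_zero fun k _ => by ring

lemma abs_inv_sub_inv_le {a b c t : ℝ} (ha : a ≤ c) (hb : b ≤ c) (ht : c < t) :
    |(t - a)⁻¹ - (t - b)⁻¹| ≤ |a - b| / (t - c) ^ 2 := by
  have hta : 0 < t - a := by linarith
  have htb : 0 < t - b := by linarith
  rw [inv_sub_inv hta.ne' htb.ne', abs_div, abs_of_pos (mul_pos hta htb), sub_sub_sub_cancel_left]
  gcongr
  nlinarith

lemma norm_deltaTrunc_commutator_Mmat_apply_le {c B W : ℝ} (hc : ∀ i, u i ≤ c) (ht : c < t)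
    (hB : ∀ i j, ‖P i j‖ ≤ B) (hW₀ : 0 ≤ W) (hW : ∀ i j, |u i - u j| ≤ W) (i j : Fin (m + 1)) :
    ‖deltaTrunc m m (P * Mmat m u t P - Mmat m u t P * P) i j‖ ≤ B ^ 2 * (W / (t - c) ^ 2) := by
  have hB₀ : 0 ≤ B := (norm_nonneg _).trans (hB 0 0)
  have hbound : 0 ≤ B ^ 2 * (W / (t - c) ^ 2) := by positivity
  induction i using Fin.lastCases with
  | last =>
    induction j using Fin.lastCases with
    | last => rwa [deltaTrunc_apply_last_last, commutator_Mmat_apply_last_last, norm_zero]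
    | cast j => simpa using hbound
  | cast i =>
    induction j using Fin.lastCases with
    | last => simpa using hbound
    | cast j =>
      have hinv : ‖(((t - u j)⁻¹ - (t - u i)⁻¹ : ℝ) : ℂ)‖ ≤ W / (t - c) ^ 2 := by
        rw [Complex.norm_real, Real.norm_eq_abs]
        exact (abs_inv_sub_inv_le (hc j) (hc i) ht).trans (by gcongr; exact hW j i)
      rw [deltaTrunc_apply_castSucc_castSucc, commutator_Mmat_apply_castSucc_castSucc, norm_mul,
        norm_mul, sq]
      exact mul_le_mul (mul_le_mul (hB _ _) (hB _ _) (norm_nonneg _) hB₀) hinv (norm_nonneg _)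
        (by positivity)

lemma norm_deltaTrunc_commutator_Mmat_le {c B W : ℝ} (hc : ∀ i, u i ≤ c) (ht : c < t)
    (hB : ∀ i j, ‖P i j‖ ≤ B) (hW₀ : 0 ≤ W) (hW : ∀ i j, |u i - u j| ≤ W) :
    ‖deltaTrunc m m (P * Mmat m u t P - Mmat m u t P * P)‖ ≤
      (m + 1) ^ 2 * (B ^ 2 * W) / (t - c) ^ 2 := by
  refine (l2_opNorm_le_of_forall_norm_apply_le
    (norm_deltaTrunc_commutator_Mmat_apply_le hc ht hB hW₀ hW)).trans_eq ?_
  simp only [Fintype.card_fin, Nat.cast_add, Nat.cast_one]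
  ring

end Mmat

theorem stmt4_general (m : ℕ) (u : Fin m → ℝ)
    (c : ℝ) (hc : ∀ i, u i ≤ c)
    (Φ : ℝ → Matrix (Fin (m + 1)) (Fin (m + 1)) ℂ)
    (hherm : ∀ t ∈ Set.Ioi c, (Φ t).IsHermitian)
    (hode : ∀ t ∈ Set.Ioi c, HasDerivAt Φ
      ((2 * (Real.pi : ℂ) * Complex.I)⁻¹ •
        (Φ t * Mmat m u t (Φ t) - Mmat m u t (Φ t) * Φ t)) t) :
    ∃ H : Matrix (Fin (m + 1)) (Fin (m + 1)) ℂ, H.IsHermitian ∧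
      ∃ C : ℝ, 0 < C ∧ ∃ t₀ : ℝ, c < t₀ ∧
        ∀ t : ℝ, t₀ ≤ t → ‖deltaTrunc m m (Φ t) - H‖ ≤ C / t := by
  set a : ℂ := (2 * (Real.pi : ℂ) * Complex.I)⁻¹
  set B := √(RCLike.re (Φ (c + 1) * Φ (c + 1)).trace)
  have hB : ∀ t ∈ Ioi c, ∀ i j, ‖Φ t i j‖ ≤ B := fun t ht =>
    norm_apply_le_of_hasDerivAt_commutator isOpen_Ioi isPreconnected_Ioi hherm hode
      (lt_add_one c) ht
  obtain ⟨W, hW⟩ := (Set.finite_range fun p : Fin m × Fin m => |u p.1 - u p.2|).bddAbove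
  set K := ‖a‖ * ((m + 1) ^ 2 * (B ^ 2 * max W 0))
  have hbound : ∀ t ∈ Ioi c,
      ‖deltaTrunc m m (a • (Φ t * Mmat m u t (Φ t) - Mmat m u t (Φ t) * Φ t))‖ ≤
        K / (t - c) ^ 2 := by
    intro t ht
    rw [deltaTrunc_smul, norm_smul, mul_div_assoc]
    exact mul_le_mul_of_nonneg_left (norm_deltaTrunc_commutator_Mmat_le hc ht (hB t ht)
      (le_max_right _ _) fun i j => le_max_of_le_left (hW ⟨(i, j), rfl⟩)) (norm_nonneg a)
  obtain ⟨H, hlim, hrate⟩ := exists_tendsto_norm_sub_le_of_norm_deriv_le_div_sq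
    (fun t ht => (hode t ht).deltaTrunc m) hbound
  have hK : 0 ≤ K := by positivity
  refine ⟨H, ?_, 2 * K + 1, by positivity, 2 * |c| + 1, by linarith [le_abs_self c, abs_nonneg c],
    fun t ht => ?_⟩
  · exact (isClosed_eq continuous_id.matrix_conjTranspose continuous_id).mem_of_tendsto hlim
      ((eventually_gt_atTop c).mono fun t ht => (hherm t ht).deltaTrunc m)
  · have hct : c < t := by linarith [le_abs_self c, abs_nonneg c]
    calc ‖deltaTrunc m m (Φ t) - H‖ ≤ K / (t - c) := hrate t hct
      _ ≤ (2 * K + 1) / t := by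
        rw [div_le_div_iff₀ (by linarith) (by linarith [abs_nonneg c])]
        nlinarith [le_abs_self c, abs_nonneg c]

/-- For a Hermitian solution of the isomonodromy ODE in the single variable `t = u_n`,
the truncation `δ_{n−1}(Φ(t))` converges to a Hermitian matrix `H` with rate `O(1/t)`. -/
theorem stmt4 (m : ℕ) (hm : 1 ≤ m) (u : Fin m → ℝ) (hu : StrictMono u)
    (c : ℝ) (hc : ∀ i, u i ≤ c)
    (Φ : ℝ → Matrix (Fin (m + 1)) (Fin (m + 1)) ℂ)
    (hherm : ∀ t ∈ Set.Ioi c, (Φ t).IsHermitian)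
    (hode : ∀ t ∈ Set.Ioi c, HasDerivAt Φ
      ((2 * (Real.pi : ℂ) * Complex.I)⁻¹ •
        (Φ t * Mmat m u t (Φ t) - Mmat m u t (Φ t) * Φ t)) t) :
    ∃ H : Matrix (Fin (m + 1)) (Fin (m + 1)) ℂ, H.IsHermitian ∧
      ∃ C : ℝ, 0 < C ∧ ∃ t₀ : ℝ, c < t₀ ∧
        ∀ t : ℝ, t₀ ≤ t → ‖deltaTrunc m m (Φ t) - H‖ ≤ C / t :=
  stmt4_general m u c hc Φ hherm hode
end
end

section
/- Let k ≥ 1 and let B be a (k+1)×(k+1) complex Hermitian matrix of arrow form: B_{ii} = λ_i for 1 ≤ i ≤ k with λ_1,...,λ_k pairwise distinct reals, B_{ij} = 0 for i ≠ j with i, j ≤ k, B_{i,k+1} = a_i ∈ ℂ and B_{k+1,i} = conj(a_i) for i ≤ k, and B_{k+1,k+1} = c ∈ ℝ. Let μ_1,...,μ_{k+1} ∈ ℝ be the eigenvalues of B counted with multiplicity, i.e. det(X·Id − B) = ∏_{j=1}^{k+1}(X − μ_j). Then for every i ∈ {1,...,k}: |a_i|²·∏_{l≠i, 1≤l≤k}(λ_i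 − λ_l) = −∏_{j=1}^{k+1}(λ_i − μ_j). -/
/-!
For `X` different from every `λ_l`, the block `X - diag(λ)` of `X • 1 - B` is invertible and its
Schur complement is the scalar `X - c - ∑_l |a_l|² / (X - λ_l)`, so
`det (X • 1 - B) = (X - c) ∏_l (X - λ_l) - ∑_l |a_l|² ∏_{m ≠ l} (X - λ_m)`.
Both sides are continuous in `X`, hence the identity holds for every `X`. At `X = λ_i` the first
product and every summand with `l ≠ i` vanish, while the left side is `∏_j (λ_i - μ_j)`.
-/

open Matrix

noncomputable section

/-- The Hermitian arrow (bordered diagonal) matrix with leading diagonal block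
`diag(λ_1,...,λ_k)`, border entries `a_i` (and their conjugates) and corner entry `c`. -/
def arrowMatrix (k : ℕ) (lam : Fin k → ℝ) (a : Fin k → ℂ) (c : ℝ) :
    Matrix (Fin (k + 1)) (Fin (k + 1)) ℂ :=
  Matrix.of fun i j =>
    if hi : i = Fin.last k then
      (if hj : j = Fin.last k then (c : ℂ) else (starRingEnd ℂ) (a (j.castPred hj)))
    else
      (if hj : j = Fin.last k then a (i.castPred hi)
       else if i = j then (lam (i.castPred hi) : ℂ) else 0)

open Finset

theorem Finset.sum_mul_prod_erase_sub_self {n R : Type*} [Fintype n] [DecidableEq n] [CommRing R]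
    (w d : n → R) (i : n) :
    ∑ l, w l * ∏ m ∈ univ.erase l, (d i - d m) = w i * ∏ m ∈ univ.erase i, (d i - d m) := by
  refine sum_eq_single i (fun l _ hli => ?_) (by simp)
  rw [prod_eq_zero (mem_erase.2 ⟨Ne.symm hli, mem_univ i⟩) (sub_self _), mul_zero]

theorem Matrix.det_fromBlocks_diagonal {n ι K : Type*} [Fintype n] [DecidableEq n] [Unique ι]
    [DecidableEq ι] [Field K] (d u v : n → K) (e : K) (hd : ∀ i, d i ≠ 0) :
    (fromBlocks (diagonal d) (replicateCol ι u) (replicateRow ι v) (of fun _ _ => e)).det =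
      e * ∏ i, d i - ∑ i, u i * v i * ∏ j ∈ univ.erase i, d j := by
  have : Invertible (diagonal d) := (diagonal d).invertibleOfIsUnitDet
    (by simpa [det_diagonal, isUnit_iff_ne_zero, prod_ne_zero_iff] using hd)
  have hinv : ⅟(diagonal d) = diagonal d⁻¹ :=
    invOf_eq_right_inv (by simp [diagonal_mul_diagonal, hd])
  rw [det_fromBlocks₁₁, hinv, det_diagonal, det_unique]
  simp only [sub_apply, of_apply, mul_apply, replicateRow_apply, replicateCol_apply, diagonal_apply,
    mul_ite, mul_zero, sum_ite_eq', mem_univ, if_true, mul_sub, mul_sum, Pi.inv_apply]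
  congr 1
  · ring
  refine sum_congr rfl fun i _ => ?_
  rw [← mul_prod_erase univ d (mem_univ i)]
  field_simp [hd i]

section ArrowMatrix

variable {k : ℕ} (lam : Fin k → ℝ) (a : Fin k → ℂ) (c : ℝ)

theorem smul_one_sub_arrowMatrix_submatrix_finSumFinEquiv (X : ℂ) :
    (X • (1 : Matrix (Fin (k + 1)) (Fin (k + 1)) ℂ) - arrowMatrix k lam a c).submatrix
        finSumFinEquiv finSumFinEquiv =
      fromBlocks (diagonal fun l => X - lam l) (replicateCol (Fin 1) fun l => -a l)
        (replicateRow (Fin 1) fun l => -starRingEnd ℂ (a l)) (of fun _ _ => X - c) := by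
  have hfirst : ∀ i : Fin k, finSumFinEquiv (n := 1) (Sum.inl i) = i.castSucc := fun _ => rfl
  have hlast : ∀ i : Fin 1, finSumFinEquiv (m := k) (Sum.inr i) = Fin.last k := fun i => by
    simp [Fin.ext_iff, Fin.fin_one_eq_zero i]
  ext (i | i) (j | j) <;>
    simp only [submatrix_apply, hfirst, hlast, fromBlocks_apply₁₁, fromBlocks_apply₁₂,
      fromBlocks_apply₂₁, fromBlocks_apply₂₂]
  · by_cases h : i = j <;> simp [arrowMatrix, one_apply, h, (Fin.castSucc_lt_last _).ne]
  all_goals simp [arrowMatrix, one_apply, (Fin.castSucc_lt_last _).ne, (Fin.castSucc_lt_last _).ne']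

theorem det_smul_one_sub_arrowMatrix_of_forall_ne {X : ℂ} (hX : ∀ l, X ≠ lam l) :
    (X • (1 : Matrix (Fin (k + 1)) (Fin (k + 1)) ℂ) - arrowMatrix k lam a c).det =
      (X - c) * ∏ l, (X - lam l) -
        ∑ l, a l * starRingEnd ℂ (a l) * ∏ m ∈ univ.erase l, (X - lam m) := by
  rw [← det_submatrix_equiv_self finSumFinEquiv,
    smul_one_sub_arrowMatrix_submatrix_finSumFinEquiv]
  refine (det_fromBlocks_diagonal (ι := Fin 1) _ _ _ _ fun l => sub_ne_zero.2 (hX l)).trans ?_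
  simp only [neg_mul_neg]

theorem det_smul_one_sub_arrowMatrix (X : ℂ) :
    (X • (1 : Matrix (Fin (k + 1)) (Fin (k + 1)) ℂ) - arrowMatrix k lam a c).det =
      (X - c) * ∏ l, (X - lam l) -
        ∑ l, a l * starRingEnd ℂ (a l) * ∏ m ∈ univ.erase l, (X - lam m) := by
  have hdense : Dense (Set.range fun l => (lam l : ℂ))ᶜ :=
    (Set.finite_range _).countable.dense_compl ℂ
  refine congrFun (Continuous.ext_on hdense (f := fun X : ℂ => _) (g := fun X : ℂ => _) ?_ ?_
    fun X hX => det_smul_one_sub_arrowMatrix_of_forall_ne lam a c fun l h => hX ⟨l, h.symm⟩) X <;>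
    fun_prop

end ArrowMatrix

theorem stmt12_general (k : ℕ) (lam : Fin k → ℝ)
    (a : Fin k → ℂ) (c : ℝ) (μ : Fin (k + 1) → ℝ)
    (hchar : ∀ X : ℂ,
      (X • (1 : Matrix (Fin (k + 1)) (Fin (k + 1)) ℂ) - arrowMatrix k lam a c).det =
        ∏ j : Fin (k + 1), (X - (μ j : ℂ))) :
    ∀ i : Fin k,
      (a i * (starRingEnd ℂ) (a i)) *
          ∏ l ∈ Finset.univ.erase i, ((lam i : ℂ) - (lam l : ℂ)) =
        - ∏ j : Fin (k + 1), ((lam i : ℂ) - (μ j : ℂ)) := by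
  intro i
  have hdet := det_smul_one_sub_arrowMatrix lam a c (lam i)
  rw [hchar, prod_eq_zero (mem_univ i) (sub_self _), mul_zero, zero_sub,
    sum_mul_prod_erase_sub_self (fun l => a l * starRingEnd ℂ (a l)) (fun l => (lam l : ℂ))] at hdet
  linear_combination hdet

/-- For an arrow Hermitian matrix with pairwise distinct diagonal entries `λ_i` and
eigenvalues `μ_1,...,μ_{k+1}`, the squared moduli of the border entries satisfy
`|a_i|²·∏_{l≠i}(λ_i − λ_l) = −∏_j(λ_i − μ_j)`. -/
theorem stmt12 (k : ℕ) (hk : 1 ≤ k) (lam : Fin k → ℝ)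
    (hlam : Function.Injective lam) (a : Fin k → ℂ) (c : ℝ) (μ : Fin (k + 1) → ℝ)
    (hchar : ∀ X : ℂ,
      (X • (1 : Matrix (Fin (k + 1)) (Fin (k + 1)) ℂ) - arrowMatrix k lam a c).det =
        ∏ j : Fin (k + 1), (X - (μ j : ℂ))) :
    ∀ i : Fin k,
      (a i * (starRingEnd ℂ) (a i)) *
          ∏ l ∈ Finset.univ.erase i, ((lam i : ℂ) - (lam l : ℂ)) =
        - ∏ j : Fin (k + 1), ((lam i : ℂ) - (μ j : ℂ)) :=
  stmt12_general k lam a c μ hchar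
end
end

section
/- Let n ≥ 2 and 1 ≤ k ≤ n−1, and let Λ = (λ^{(m)}_i)_{1≤i≤m≤n} be a Gelfand-Tsetlin pattern of size n with integer entries, i.e. λ^{(m)}_i ∈ ℤ and λ^{(m)}_i ≥ λ^{(m−1)}_i ≥ λ^{(m)}_{i+1} for all 1 ≤ i ≤ m−1 ≤ n−1; use the convention λ^{(m)}_j := 0 for j < 1 or j > m and λ^{(0)}_j := 0. Define x^{(k)}_j(Λ) = −λ^{(k)}_j + λ^{(k−1)}_{j−1} − λ^{(k)}_{j−1} + λ^{(k+1)}_j, X^{(k)}_j(Λ) = ∑_{i=1}^{j} x^{(k)}_i(Λ) and ε_k(Λ) = max{X^{(k)}_1(Λ),...,X^{(k)}_k(Λ)}. Suppose ε_k(Λ) > 0 and let l = min{j ∈ {1,...,k} : X^{(k)}_j(Λ) = ε_k(Λ)}. Then the array Λ + δ^{(k)}_l, obtained from Λ by replacing λ^{(k)}_l with λ^{(k)}_l + 1, is again a Gelfand-Tsetlin pattern. -/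
/-!
Raising `λ^{(k)}_l` by one keeps the interlacing conditions exactly when
`λ^{(k)}_l < λ^{(k+1)}_l` and (for `l ≥ 2`) `λ^{(k)}_l < λ^{(k-1)}_{l-1}`.
Since `l` is the first index at which the partial sums `X^{(k)}` reach their positive maximum,
`X^{(k)}_{l-1} < X^{(k)}_l`, i.e. `x^{(k)}_l > 0`. Grouping the four terms of `x^{(k)}_l` into two
differences in either of two ways, interlacing makes one difference `≤ 0`, so the other, which is
one of the two gaps above, is positive.
-/

noncomputable section

/-- An integer Gelfand-Tsetlin pattern of size `n`: a triangular array `Λ m i`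
(`1 ≤ i ≤ m ≤ n`, out-of-range entries zero) satisfying the interlacing conditions
`λ^{(m)}_i ≥ λ^{(m−1)}_i ≥ λ^{(m)}_{i+1}`. -/
def IsGTPattern (n : ℕ) (Λ : ℕ → ℕ → ℤ) : Prop :=
  (∀ m i : ℕ, (i = 0 ∨ m < i ∨ n < m) → Λ m i = 0) ∧
  (∀ m i : ℕ, 1 ≤ i → i + 1 ≤ m → m ≤ n →
    Λ (m - 1) i ≤ Λ m i ∧ Λ m (i + 1) ≤ Λ (m - 1) i)

/-- `x^{(k)}_j(Λ) = −λ^{(k)}_j + λ^{(k−1)}_{j−1} − λ^{(k)}_{j−1} + λ^{(k+1)}_j`. -/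
def xval (Λ : ℕ → ℕ → ℤ) (k j : ℕ) : ℤ :=
  -Λ k j + Λ (k - 1) (j - 1) - Λ k (j - 1) + Λ (k + 1) j

/-- `X^{(k)}_j(Λ) = ∑_{i=1}^{j} x^{(k)}_i(Λ)`. -/
def Xval (Λ : ℕ → ℕ → ℤ) (k j : ℕ) : ℤ := ∑ i ∈ Finset.Icc 1 j, xval Λ k i

def raiseEntry (Λ : ℕ → ℕ → ℤ) (k l : ℕ) : ℕ → ℕ → ℤ :=
  fun m i => if m = k ∧ i = l then Λ k l + 1 else Λ m i

section PartialSums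

variable (Λ : ℕ → ℕ → ℤ) (k : ℕ)

theorem Xval_zero : Xval Λ k 0 = 0 := by
  simp [Xval]

theorem Xval_eq_Xval_sub_one_add_xval {l : ℕ} (hl : 1 ≤ l) :
    Xval Λ k l = Xval Λ k (l - 1) + xval Λ k l := by
  obtain ⟨j, rfl⟩ : ∃ j, l = j + 1 := ⟨l - 1, by omega⟩
  rw [Nat.add_sub_cancel, Xval, Xval, Finset.sum_Icc_succ_top (by omega)]

variable {Λ k}

theorem xval_pos_of_Xval_sub_one_lt {l : ℕ} (hl : 1 ≤ l) (h : Xval Λ k (l - 1) < Xval Λ k l) :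
    0 < xval Λ k l := by
  have := Xval_eq_Xval_sub_one_add_xval Λ k hl
  omega

theorem Xval_sub_one_lt_of_isFirstMax {l : ℕ} (hl : l ∈ Finset.Icc 1 k)
    (hmax : ∀ j ∈ Finset.Icc 1 k, Xval Λ k j ≤ Xval Λ k l) (hpos : 0 < Xval Λ k l)
    (hmin : ∀ j ∈ Finset.Icc 1 k, Xval Λ k j = Xval Λ k l → l ≤ j) :
    Xval Λ k (l - 1) < Xval Λ k l := by
  obtain ⟨hl1, hlk⟩ := Finset.mem_Icc.mp hl
  rcases Nat.lt_or_ge 1 l with hl2 | hl1'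
  · have hprev : l - 1 ∈ Finset.Icc 1 k := Finset.mem_Icc.mpr ⟨by omega, by omega⟩
    refine lt_of_le_of_ne (hmax _ hprev) fun heq => ?_
    have := hmin _ hprev heq
    omega
  · rwa [show l - 1 = 0 by omega, Xval_zero]

end PartialSums

section Interlacing

variable {n : ℕ} {Λ : ℕ → ℕ → ℤ}

theorem lt_succ_row_of_xval_pos (hΛ : IsGTPattern n Λ) {k l : ℕ} (hl : 1 ≤ l) (hlk : l ≤ k)
    (hkn : k ≤ n) (hx : 0 < xval Λ k l) : Λ k l < Λ (k + 1) l := by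
  have hle : Λ (k - 1) (l - 1) ≤ Λ k (l - 1) := by
    rcases Nat.lt_or_ge 1 l with hl2 | hl1
    · exact (hΛ.2 k (l - 1) (by omega) (by omega) hkn).1
    · rw [hΛ.1 _ _ (Or.inl (by omega)), hΛ.1 _ _ (Or.inl (by omega))]
  unfold xval at hx
  omega

theorem lt_pred_row_pred_of_xval_pos (hΛ : IsGTPattern n Λ) {k l : ℕ} (hl : 2 ≤ l)
    (hlk : l ≤ k) (hkn : k < n) (hx : 0 < xval Λ k l) : Λ k l < Λ (k - 1) (l - 1) := by
  have hle := (hΛ.2 (k + 1) (l - 1) (by omega) (by omega) hkn).2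
  rw [Nat.sub_add_cancel (by omega : 1 ≤ l), Nat.add_sub_cancel] at hle
  unfold xval at hx
  omega

theorem isGTPattern_raiseEntry (hΛ : IsGTPattern n Λ) {k l : ℕ} (hl : 1 ≤ l) (hlk : l ≤ k)
    (hkn : k < n) (hup : Λ k l < Λ (k + 1) l) (hdiag : 2 ≤ l → Λ k l < Λ (k - 1) (l - 1)) :
    IsGTPattern n (raiseEntry Λ k l) := by
  obtain ⟨hzero, hintl⟩ := hΛ
  refine ⟨fun m i hout => ?_, fun m i hi him hmn => ?_⟩
  · simp only [raiseEntry]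
    split_ifs with hkl
    · omega
    · exact hzero m i hout
  · obtain ⟨hbelow, habove⟩ := hintl m i hi him hmn
    simp only [raiseEntry]
    constructor
    · split_ifs with h1 h2 h2
      · omega
      · obtain ⟨hm, rfl⟩ := h1
        obtain rfl : m = k + 1 := by omega
        omega
      · obtain ⟨rfl, rfl⟩ := h2
        omega
      · exact hbelow
    · split_ifs with h1 h2 h2
      · omega
      · obtain ⟨rfl, hil⟩ := h1
        obtain rfl : i = l - 1 := by omega
        have := hdiag (by omega)
        omega
      · obtain ⟨hm, rfl⟩ := h2
        obtain rfl : m = k + 1 := by omega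
        simp only [Nat.add_sub_cancel] at habove
        omega
      · exact habove

end Interlacing

theorem stmt17_general (n k : ℕ) (hk : k ≤ n - 1)
    (Λ : ℕ → ℕ → ℤ) (hΛ : IsGTPattern n Λ)
    (l : ℕ) (hl : l ∈ Finset.Icc 1 k)
    (hmax : ∀ j ∈ Finset.Icc 1 k, Xval Λ k j ≤ Xval Λ k l)
    (hpos : 0 < Xval Λ k l)
    (hmin : ∀ j ∈ Finset.Icc 1 k, Xval Λ k j = Xval Λ k l → l ≤ j) :
    IsGTPattern n (fun m i => if m = k ∧ i = l then Λ k l + 1 else Λ m i) := by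
  obtain ⟨hl1, hlk⟩ := Finset.mem_Icc.mp hl
  have hkn : k < n := by omega
  have hx : 0 < xval Λ k l :=
    xval_pos_of_Xval_sub_one_lt hl1 (Xval_sub_one_lt_of_isFirstMax hl hmax hpos hmin)
  exact isGTPattern_raiseEntry hΛ hl1 hlk hkn
    (lt_succ_row_of_xval_pos hΛ hl1 hlk hkn.le hx)
    (fun hl2 => lt_pred_row_pred_of_xval_pos hΛ hl2 hlk hkn hx)

/-- Well-definedness of the crystal raising operator `ẽ_k` on integer Gelfand-Tsetlin
patterns: if `ε_k(Λ) > 0` and `l` is the smallest index in `{1,...,k}` at which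
`X^{(k)}` attains its maximum `ε_k(Λ)`, then increasing `λ^{(k)}_l` by `1` yields again
a Gelfand-Tsetlin pattern. -/
theorem stmt17 (n k : ℕ) (hn : 2 ≤ n) (hk1 : 1 ≤ k) (hk : k ≤ n - 1)
    (Λ : ℕ → ℕ → ℤ) (hΛ : IsGTPattern n Λ)
    (l : ℕ) (hl : l ∈ Finset.Icc 1 k)
    (hmax : ∀ j ∈ Finset.Icc 1 k, Xval Λ k j ≤ Xval Λ k l)
    (hpos : 0 < Xval Λ k l)
    (hmin : ∀ j ∈ Finset.Icc 1 k, Xval Λ k j = Xval Λ k l → l ≤ j) :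
    IsGTPattern n (fun m i => if m = k ∧ i = l then Λ k l + 1 else Λ m i) :=
  stmt17_general n k hk Λ hΛ l hl hmax hpos hmin
end
end

section
/- Let n ≥ 2 and 1 ≤ k ≤ n−1, and let Λ = (λ^{(m)}_i)_{1≤i≤m≤n} be a Gelfand-Tsetlin pattern of size n with integer entries, i.e. λ^{(m)}_i ∈ ℤ and λ^{(m)}_i ≥ λ^{(m−1)}_i ≥ λ^{(m)}_{i+1} for all 1 ≤ i ≤ m−1 ≤ n−1; use the convention λ^{(m)}_j := 0 for j < 1 or j > m and λ^{(0)}_j := 0. Define y^{(k)}_j(Λ) = λ^{(k)}_j − λ^{(k−1)}_j + λ^{(k)}_{j+1} − λ^{(k+1)}_{j+1}, Y^{(k)}_j(Λ) = ∑_{i=j}^{k} y^{(k)}_i(Λ) and φ_k(Λ) = max{Y^{(k)}_1(Λ),...,Y^{(k)}_k(Λ)}. Suppose φ_k(Λ) > 0 and let l = max{j ∈ {1,...,k} : Y^{(k)}_j(Λ) = φ_k(Λ)}. Then the array Λ − δ^{(k)}_l, obtained from Λ by replacing λ^{(k)}_l with λ^{(k)}_l − 1, is again a Gelfand-Tsetlin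 pattern. -/
/-!
Lowering `λ^{(k)}_l` can only break the two interlacing conditions bounding it from below,
`λ^{(k-1)}_l ≤ λ^{(k)}_l` (present only for `l < k`) and `λ^{(k+1)}_{l+1} ≤ λ^{(k)}_l`, so
it suffices that both are strict. For `l < k` the maximality of `l` gives
`Y^{(k)}_{l+1} < Y^{(k)}_l`, i.e. `y^{(k)}_l > 0`; since `y^{(k)}_l` is each of the two gaps
plus a non-positive interlacing difference, both gaps are positive. For `l = k`,
`Y^{(k)}_k = λ^{(k)}_k - λ^{(k+1)}_{k+1}` is positive by assumption.
-/

noncomputable section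

/-- `y^{(k)}_j(Λ) = λ^{(k)}_j − λ^{(k−1)}_j + λ^{(k)}_{j+1} − λ^{(k+1)}_{j+1}`. -/
def yval (Λ : ℕ → ℕ → ℤ) (k j : ℕ) : ℤ :=
  Λ k j - Λ (k - 1) j + Λ k (j + 1) - Λ (k + 1) (j + 1)

/-- `Y^{(k)}_j(Λ) = ∑_{i=j}^{k} y^{(k)}_i(Λ)`. -/
def Yval (Λ : ℕ → ℕ → ℤ) (k j : ℕ) : ℤ := ∑ i ∈ Finset.Icc j k, yval Λ k i

open Finset

/-- `Λ - δ^{(k)}_l`. -/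
def lowerEntry (Λ : ℕ → ℕ → ℤ) (k l : ℕ) : ℕ → ℕ → ℤ :=
  fun m i => if m = k ∧ i = l then Λ k l - 1 else Λ m i

theorem Yval_eq_yval_add_Yval_succ (Λ : ℕ → ℕ → ℤ) {k j : ℕ} (hjk : j ≤ k) :
    Yval Λ k j = yval Λ k j + Yval Λ k (j + 1) := by
  rw [Yval, Yval, ← add_sum_Ioc_eq_sum_Icc hjk, Icc_add_one_left_eq_Ioc]

theorem yval_pos_of_Yval_succ_lt (Λ : ℕ → ℕ → ℤ) {k j : ℕ} (hjk : j ≤ k)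
    (h : Yval Λ k (j + 1) < Yval Λ k j) : 0 < yval Λ k j := by
  rw [Yval_eq_yval_add_Yval_succ Λ hjk] at h
  linarith

namespace IsGTPattern

variable {n : ℕ} {Λ : ℕ → ℕ → ℤ}

theorem Yval_self (hΛ : IsGTPattern n Λ) {k : ℕ} (hk : 1 ≤ k) :
    Yval Λ k k = Λ k k - Λ (k + 1) (k + 1) := by
  have h₁ : Λ (k - 1) k = 0 := hΛ.1 _ _ (by omega)
  have h₂ : Λ k (k + 1) = 0 := hΛ.1 _ _ (by omega)
  rw [Yval, Icc_self, sum_singleton, yval, h₁, h₂]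
  ring

theorem lt_of_yval_pos (hΛ : IsGTPattern n Λ) {k l : ℕ} (hl : 1 ≤ l) (hlk : l < k)
    (hkn : k < n) (hy : 0 < yval Λ k l) :
    Λ (k - 1) l < Λ k l ∧ Λ (k + 1) (l + 1) < Λ k l := by
  have below : Λ k (l + 1) ≤ Λ (k + 1) (l + 1) := by
    simpa using (hΛ.2 (k + 1) (l + 1) (by omega) (by omega) hkn).1
  have left : Λ k (l + 1) ≤ Λ (k - 1) l := (hΛ.2 k l hl hlk hkn.le).2
  unfold yval at hy
  constructor <;> linarith

theorem lowerEntry (hΛ : IsGTPattern n Λ) {k l : ℕ} (hl : 1 ≤ l) (hlk : l ≤ k)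
    (hkn : k ≤ n) (h_up : l < k → Λ (k - 1) l < Λ k l)
    (h_down : k < n → Λ (k + 1) (l + 1) < Λ k l) :
    IsGTPattern n (lowerEntry Λ k l) := by
  refine ⟨fun m i hmi => ?_, fun m i hi him hmn => ?_⟩
  · have : ¬(m = k ∧ i = l) := by omega
    simp only [_root_.lowerEntry, this, if_false]
    exact hΛ.1 m i hmi
  · obtain ⟨h₁, h₂⟩ := hΛ.2 m i hi him hmn
    simp only [_root_.lowerEntry]
    constructor <;> split_ifs <;> grind

end IsGTPattern

theorem stmt18_general (n k : ℕ) (hk : k ≤ n - 1)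
    (Λ : ℕ → ℕ → ℤ) (hΛ : IsGTPattern n Λ)
    (l : ℕ) (hl : l ∈ Finset.Icc 1 k)
    (hmax : ∀ j ∈ Finset.Icc 1 k, Yval Λ k j ≤ Yval Λ k l)
    (hpos : 0 < Yval Λ k l)
    (hargmax : ∀ j ∈ Finset.Icc 1 k, Yval Λ k j = Yval Λ k l → j ≤ l) :
    IsGTPattern n (fun m i => if m = k ∧ i = l then Λ k l - 1 else Λ m i) := by
  obtain ⟨hl1, hlk⟩ := mem_Icc.mp hl
  have hkn : k < n := by omega
  rcases hlk.lt_or_eq with hlk | rfl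
  · have hsucc : l + 1 ∈ Icc 1 k := mem_Icc.mpr ⟨by omega, hlk⟩
    have hdrop : Yval Λ k (l + 1) < Yval Λ k l :=
      (hmax _ hsucc).lt_of_ne fun h => by have := hargmax _ hsucc h; omega
    obtain ⟨h_up, h_down⟩ :=
      hΛ.lt_of_yval_pos hl1 hlk hkn (yval_pos_of_Yval_succ_lt Λ hlk.le hdrop)
    exact hΛ.lowerEntry hl1 hlk.le hkn.le (fun _ => h_up) (fun _ => h_down)
  · rw [hΛ.Yval_self hl1] at hpos
    exact hΛ.lowerEntry hl1 le_rfl hkn.le (fun h => (lt_irrefl l h).elim) fun _ => by linarith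

/-- Well-definedness of the crystal lowering operator `f̃_k` on integer Gelfand-Tsetlin
patterns: if `φ_k(Λ) > 0` and `l` is the largest index in `{1,...,k}` at which `Y^{(k)}`
attains its maximum `φ_k(Λ)`, then decreasing `λ^{(k)}_l` by `1` yields again a
Gelfand-Tsetlin pattern. -/
theorem stmt18 (n k : ℕ) (hn : 2 ≤ n) (hk1 : 1 ≤ k) (hk : k ≤ n - 1)
    (Λ : ℕ → ℕ → ℤ) (hΛ : IsGTPattern n Λ)
    (l : ℕ) (hl : l ∈ Finset.Icc 1 k)
    (hmax : ∀ j ∈ Finset.Icc 1 k, Yval Λ k j ≤ Yval Λ k l)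
    (hpos : 0 < Yval Λ k l)
    (hargmax : ∀ j ∈ Finset.Icc 1 k, Yval Λ k j = Yval Λ k l → j ≤ l) :
    IsGTPattern n (fun m i => if m = k ∧ i = l then Λ k l - 1 else Λ m i) :=
  stmt18_general n k hk Λ hΛ l hl hmax hpos hargmax
end
end
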